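/- arXiv:2304.14861 — 2 statements merged into one kernel-verified Lean document; each statement's English description precedes it below -/
import Mathlib

section
/- Let γ : ℝ × ℝ → EuclideanSpace ℝ (Fin 3) be a smooth (C^∞) map, ℓ > 0, and suppose ‖∂ₛγ(0, s)‖ = 1 for all s ∈ [0, ℓ] and the endpoints are fixed: γ(t, 0) = γ(0, 0) and γ(t, ℓ) = γ(0, ℓ) for all t. Define L(t) = ∫₀^ℓ ‖∂ₛγ(t, s)‖ ds. Then L is differentiable at t = 0 and L'(0) = −∫₀^ℓ ⟪∂ₜγ(0, s), ∂ₛ²γ(0, s)⟫ ds. -/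
open RealInnerProductSpace intervalIntegral

/-- First partial derivative of a filament motion in the space parameter `s`. -/
noncomputable def dS (γ : ℝ × ℝ → EuclideanSpace ℝ (Fin 3)) (t s : ℝ) :
    EuclideanSpace ℝ (Fin 3) :=
  deriv (fun σ => γ (t, σ)) s

/-- Second partial derivative of a filament motion in the space parameter `s`. -/
noncomputable def dSS (γ : ℝ × ℝ → EuclideanSpace ℝ (Fin 3)) (t s : ℝ) :
    EuclideanSpace ℝ (Fin 3) :=
  deriv (fun σ => dS γ t σ) s

/-- Partial derivative of a filament motion in the time parameter `t`. -/
noncomputable def dT (γ : ℝ × ℝ → EuclideanSpace ℝ (Fin 3)) (t s : ℝ) :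
    EuclideanSpace ℝ (Fin 3) :=
  deriv (fun τ => γ (τ, s)) t

section Aux

variable {E : Type*} [NormedAddCommGroup E] [NormedSpace ℝ E]

lemma sliceR {f : ℝ × ℝ → E} (hf : Differentiable ℝ f) (t s : ℝ) :
    HasDerivAt (fun σ => f (t, σ)) (fderiv ℝ f (t, s) (0, 1)) s := by
  have h1 : HasDerivAt (fun σ : ℝ => ((t, σ) : ℝ × ℝ)) ((0 : ℝ), (1 : ℝ)) s :=
    (hasDerivAt_const s t).prodMk (hasDerivAt_id s)
  exact (hf (t, s)).hasFDerivAt.comp_hasDerivAt s h1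

lemma sliceL {f : ℝ × ℝ → E} (hf : Differentiable ℝ f) (t s : ℝ) :
    HasDerivAt (fun τ => f (τ, s)) (fderiv ℝ f (t, s) (1, 0)) t := by
  have h1 : HasDerivAt (fun τ : ℝ => ((τ, s) : ℝ × ℝ)) ((1 : ℝ), (0 : ℝ)) t :=
    (hasDerivAt_id t).prodMk (hasDerivAt_const t s)
  exact (hf (t, s)).hasFDerivAt.comp_hasDerivAt t h1

lemma sliceR_apply {A : ℝ × ℝ → (ℝ × ℝ) →L[ℝ] E} (hA : Differentiable ℝ A)
    (v : ℝ × ℝ) (t s : ℝ) :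
    HasDerivAt (fun σ => A (t, σ) v) (fderiv ℝ A (t, s) (0, 1) v) s := by
  have := (sliceR hA t s).clm_apply (hasDerivAt_const s v)
  simpa using this

lemma sliceL_apply {A : ℝ × ℝ → (ℝ × ℝ) →L[ℝ] E} (hA : Differentiable ℝ A)
    (v : ℝ × ℝ) (t s : ℝ) :
    HasDerivAt (fun τ => A (τ, s) v) (fderiv ℝ A (t, s) (1, 0) v) t := by
  have := (sliceL hA t s).clm_apply (hasDerivAt_const t v)
  simpa using this

end Aux

/-- Gauss' first law for the variation of length: for a smooth filament motion with
fixed endpoints whose initial curve has unit speed, the length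
`L(t) = ∫₀^ℓ ‖∂ₛγ(t,s)‖ ds` is differentiable at `t = 0` with
`L'(0) = −∫₀^ℓ ⟪∂ₜγ(0,s), ∂ₛ²γ(0,s)⟫ ds`. -/
theorem first_variation_of_length (γ : ℝ × ℝ → EuclideanSpace ℝ (Fin 3))
    (hγ : ContDiff ℝ (⊤ : ℕ∞) γ) (ℓ : ℝ) (hℓ : 0 < ℓ)
    (hunit : ∀ s ∈ Set.Icc (0 : ℝ) ℓ, ‖dS γ 0 s‖ = 1)
    (hends : ∀ t : ℝ, γ (t, 0) = γ (0, 0) ∧ γ (t, ℓ) = γ (0, ℓ)) :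
    HasDerivAt (fun t => ∫ s in (0 : ℝ)..ℓ, ‖dS γ t s‖)
      (-∫ s in (0 : ℝ)..ℓ, ⟪dT γ 0 s, dSS γ 0 s⟫) 0 := by
  have hγd : Differentiable ℝ γ := hγ.differentiable (by simp)
  set A : ℝ × ℝ → (ℝ × ℝ) →L[ℝ] EuclideanSpace ℝ (Fin 3) := fderiv ℝ γ with hAdef
  have hAcd : ContDiff ℝ (⊤ : ℕ∞) A := hγ.fderiv_right (by simp)
  have hAd : Differentiable ℝ A := hAcd.differentiable (by simp)
  have hAc : Continuous A := hAcd.continuous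
  have hA'c : Continuous (fderiv ℝ A) := hAcd.continuous_fderiv (by simp)
  have hdS : ∀ t s, dS γ t s = A (t, s) (0, 1) := fun t s => (sliceR hγd t s).deriv
  have hdT : ∀ t s, dT γ t s = A (t, s) (1, 0) := fun t s => (sliceL hγd t s).deriv
  have hdSS : ∀ s, dSS γ 0 s = fderiv ℝ A (0, s) (0, 1) (0, 1) := by
    intro s
    have hfun : (fun σ => dS γ 0 σ) = fun σ => A (0, σ) (0, 1) := funext fun σ => hdS 0 σ
    rw [dSS, hfun]
    exact (sliceR_apply hAd (0, 1) 0 s).deriv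
  have hsymm : ∀ p : ℝ × ℝ, ∀ v w, fderiv ℝ A p v w = fderiv ℝ A p w v := fun p v w =>
    second_derivative_symmetric (fun y => (hγd y).hasFDerivAt) ((hAd p).hasFDerivAt) v w
  have hdT0 : dT γ 0 0 = 0 := by
    have h : (fun τ => γ (τ, 0)) = fun _ => γ (0, 0) := funext fun τ => (hends τ).1
    rw [dT, h, deriv_const]
  have hdTℓ : dT γ 0 ℓ = 0 := by
    have h : (fun τ => γ (τ, ℓ)) = fun _ => γ (0, ℓ) := funext fun τ => (hends τ).2
    rw [dT, h, deriv_const]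
  -- choose ε so that ‖∂ₛγ‖ > 1/2 on ball ε × Icc
  have hGcont : Continuous fun p : ℝ × ℝ => ‖A p (0, 1)‖ :=
    (hAc.clm_apply continuous_const).norm
  have hUopen : IsOpen {p : ℝ × ℝ | 1 / 2 < ‖A p (0, 1)‖} :=
    isOpen_lt continuous_const hGcont
  have hKc : IsCompact (({0} : Set ℝ) ×ˢ Set.Icc (0 : ℝ) ℓ) :=
    isCompact_singleton.prod isCompact_Icc
  have hKU : (({0} : Set ℝ) ×ˢ Set.Icc (0 : ℝ) ℓ) ⊆ {p | 1 / 2 < ‖A p (0, 1)‖} := by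
    rintro ⟨x, s⟩ ⟨hx, hs⟩
    simp only [Set.mem_singleton_iff] at hx
    subst hx
    have h1 := hunit s hs
    rw [hdS] at h1
    rw [Set.mem_setOf_eq, h1]
    norm_num
  obtain ⟨ε, εpos, hε⟩ := hKc.exists_thickening_subset_open hUopen hKU
  have hball : ∀ x ∈ Metric.ball (0 : ℝ) ε, ∀ s ∈ Set.Icc (0 : ℝ) ℓ,
      1 / 2 < ‖A (x, s) (0, 1)‖ := by
    intro x hx s hs
    refine hε ?_
    rw [Metric.mem_thickening_iff]
    refine ⟨(0, s), ⟨rfl, hs⟩, ?_⟩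
    have hd : dist ((x, s) : ℝ × ℝ) ((0, s) : ℝ × ℝ) = dist x 0 := by
      simp [Prod.dist_eq]
    rw [hd]
    exact Metric.mem_ball.mp hx
  -- bound
  obtain ⟨M, hM⟩ := ((isCompact_closedBall (0 : ℝ) ε).prod isCompact_Icc).exists_bound_of_continuousOn
    (f := fderiv ℝ A) hA'c.continuousOn
  set F' : ℝ → ℝ → ℝ := fun x s =>
    ⟪A (x, s) (0, 1), fderiv ℝ A (x, s) (1, 0) (0, 1)⟫ / ‖A (x, s) (0, 1)‖ with hF'def
  have key : ∀ x ∈ Metric.ball (0 : ℝ) ε, ∀ s ∈ Set.Icc (0 : ℝ) ℓ,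
      HasDerivAt (fun t => ‖dS γ t s‖) (F' x s) x := by
    intro x hx s hs
    have hfd : HasDerivAt (fun τ => A (τ, s) ((0 : ℝ), (1 : ℝ)))
        (fderiv ℝ A (x, s) (1, 0) (0, 1)) x := sliceL_apply hAd (0, 1) x s
    set f : ℝ → EuclideanSpace ℝ (Fin 3) := fun τ => A (τ, s) ((0 : ℝ), (1 : ℝ)) with hfdef
    set B : EuclideanSpace ℝ (Fin 3) := fderiv ℝ A (x, s) (1, 0) (0, 1) with hBdef
    have hnorm : (1 : ℝ) / 2 < ‖f x‖ := hball x hx s hs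
    have hne : ‖f x‖ ≠ 0 := by positivity
    have hq : HasDerivAt (fun τ => ⟪f τ, f τ⟫) (⟪f x, B⟫ + ⟪B, f x⟫) x := hfd.inner ℝ hfd
    have hqx : ⟪f x, f x⟫ = ‖f x‖ ^ 2 := real_inner_self_eq_norm_sq (f x)
    have hsq : HasDerivAt (fun τ => Real.sqrt ⟪f τ, f τ⟫)
        (1 / (2 * Real.sqrt ⟪f x, f x⟫) * (⟪f x, B⟫ + ⟪B, f x⟫)) x :=
      (Real.hasDerivAt_sqrt (by rw [hqx]; positivity)).comp x hq
    have heq : (fun τ => Real.sqrt ⟪f τ, f τ⟫) = fun τ => ‖dS γ τ s‖ := by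
      funext τ
      rw [hdS]
      show Real.sqrt ⟪f τ, f τ⟫ = ‖f τ‖
      rw [real_inner_self_eq_norm_sq, Real.sqrt_sq (norm_nonneg _)]
    rw [heq] at hsq
    convert hsq using 1
    rw [hqx, Real.sqrt_sq (norm_nonneg _)]
    show ⟪f x, B⟫ / ‖f x‖ = 1 / (2 * ‖f x‖) * (⟪f x, B⟫ + ⟪B, f x⟫)
    rw [real_inner_comm B (f x)]
    have haux : ∀ c r : ℝ, r ≠ 0 → c / r = 1 / (2 * r) * (c + c) := by
      intro c r hr
      field_simp
      ring
    exact haux _ _ hne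
  have hbound : ∀ s ∈ Set.Icc (0 : ℝ) ℓ, ∀ x ∈ Metric.ball (0 : ℝ) ε, ‖F' x s‖ ≤ M := by
    intro s hs x hx
    have h1 : (1 : ℝ) / 2 < ‖A (x, s) (0, 1)‖ := hball x hx s hs
    have hpos : (0 : ℝ) < ‖A (x, s) (0, 1)‖ := by linarith
    have hB : ‖fderiv ℝ A (x, s) (1, 0) (0, 1)‖ ≤ M := by
      have e1 : ‖((1 : ℝ), (0 : ℝ))‖ = 1 := by simp [Prod.norm_def]
      have e2 : ‖((0 : ℝ), (1 : ℝ))‖ = 1 := by simp [Prod.norm_def]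
      calc ‖fderiv ℝ A (x, s) (1, 0) (0, 1)‖
          ≤ ‖fderiv ℝ A (x, s) (1, 0)‖ * ‖((0 : ℝ), (1 : ℝ))‖ :=
            ContinuousLinearMap.le_opNorm _ _
        _ ≤ ‖fderiv ℝ A (x, s)‖ * ‖((1 : ℝ), (0 : ℝ))‖ * ‖((0 : ℝ), (1 : ℝ))‖ := by
            gcongr
            exact ContinuousLinearMap.le_opNorm _ _
        _ = ‖fderiv ℝ A (x, s)‖ := by rw [e1, e2]; ring
        _ ≤ M := hM (x, s) ⟨Metric.ball_subset_closedBall hx, hs⟩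
    have h2 : ‖F' x s‖ ≤ ‖fderiv ℝ A (x, s) (1, 0) (0, 1)‖ := by
      rw [hF'def]
      simp only [Real.norm_eq_abs, abs_div, abs_norm]
      rw [div_le_iff₀ hpos]
      calc |⟪A (x, s) (0, 1), fderiv ℝ A (x, s) (1, 0) (0, 1)⟫|
          ≤ ‖A (x, s) (0, 1)‖ * ‖fderiv ℝ A (x, s) (1, 0) (0, 1)‖ :=
            abs_real_inner_le_norm _ _
        _ = ‖fderiv ℝ A (x, s) (1, 0) (0, 1)‖ * ‖A (x, s) (0, 1)‖ := by ring
    linarith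
  -- differentiate under the integral sign
  have hIoc : Set.uIoc (0 : ℝ) ℓ = Set.Ioc 0 ℓ := Set.uIoc_of_le hℓ.le
  have hFc : ∀ x : ℝ, Continuous fun s => ‖dS γ x s‖ := by
    intro x
    have h : (fun s => ‖dS γ x s‖) = fun s => ‖A (x, s) (0, 1)‖ :=
      funext fun s => by rw [hdS]
    rw [h]
    exact ((hAc.comp (Continuous.prodMk_right x)).clm_apply continuous_const).norm
  have hF'0meas : MeasureTheory.AEStronglyMeasurable (F' 0)
      (MeasureTheory.volume.restrict (Set.uIoc (0 : ℝ) ℓ)) := by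
    apply Measurable.aestronglyMeasurable
    apply Measurable.div
    · exact (Continuous.inner
        ((hAc.comp (Continuous.prodMk_right (0 : ℝ))).clm_apply continuous_const)
        (((hA'c.comp (Continuous.prodMk_right (0 : ℝ))).clm_apply continuous_const).clm_apply
          continuous_const)).measurable
    · exact ((hAc.comp (Continuous.prodMk_right (0 : ℝ))).clm_apply continuous_const).norm.measurable
  obtain ⟨-, hL⟩ := intervalIntegral.hasDerivAt_integral_of_dominated_loc_of_deriv_le (Metric.ball_mem_nhds 0 εpos)
    (Filter.Eventually.of_forall fun x => ((hFc x).aestronglyMeasurable).restrict)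
    ((hFc 0).intervalIntegrable 0 ℓ) hF'0meas
    (Filter.Eventually.of_forall fun s hs x hx => by
      rw [hIoc] at hs
      exact hbound s ⟨hs.1.le, hs.2⟩ x hx)
    ((continuous_const.intervalIntegrable 0 ℓ : IntervalIntegrable (fun _ => M) MeasureTheory.volume 0 ℓ))
    (Filter.Eventually.of_forall fun s hs x hx => by
      rw [hIoc] at hs
      exact key x hx s ⟨hs.1.le, hs.2⟩)
  -- identify the derivative
  have hint : (∫ s in (0 : ℝ)..ℓ, F' 0 s) = -∫ s in (0 : ℝ)..ℓ, ⟪dT γ 0 s, dSS γ 0 s⟫ := by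
    set g : ℝ → ℝ := fun s => ⟪A (0, s) (0, 1), fderiv ℝ A (0, s) (0, 1) (1, 0)⟫ with hgdef
    set h2 : ℝ → ℝ := fun s => ⟪fderiv ℝ A (0, s) (0, 1) (0, 1), A (0, s) (1, 0)⟫ with hh2def
    have hgc : Continuous g :=
      Continuous.inner ((hAc.comp (Continuous.prodMk_right (0 : ℝ))).clm_apply continuous_const)
        (((hA'c.comp (Continuous.prodMk_right (0 : ℝ))).clm_apply continuous_const).clm_apply
          continuous_const)
    have hh2c : Continuous h2 :=
      Continuous.inner
        (((hA'c.comp (Continuous.prodMk_right (0 : ℝ))).clm_apply continuous_const).clm_apply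
          continuous_const)
        ((hAc.comp (Continuous.prodMk_right (0 : ℝ))).clm_apply continuous_const)
    have step1 : (∫ s in (0 : ℝ)..ℓ, F' 0 s) = ∫ s in (0 : ℝ)..ℓ, g s := by
      apply intervalIntegral.integral_congr
      intro s hs
      rw [Set.uIcc_of_le hℓ.le] at hs
      have h1 := hunit s hs
      rw [hdS] at h1
      rw [hF'def]
      simp only
      rw [h1, div_one, hsymm]
    have ibp : (∫ s in (0 : ℝ)..ℓ, (g s + h2 s)) = 0 := by
      have hφ : ∀ s ∈ Set.uIcc (0 : ℝ) ℓ,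
          HasDerivAt (fun σ => ⟪A (0, σ) ((0 : ℝ), (1 : ℝ)), A (0, σ) ((1 : ℝ), (0 : ℝ))⟫)
            (g s + h2 s) s := fun s _ =>
        (sliceR_apply hAd (0, 1) 0 s).inner ℝ (sliceR_apply hAd (1, 0) 0 s)
      rw [intervalIntegral.integral_eq_sub_of_hasDerivAt hφ
        ((hgc.add hh2c).intervalIntegrable 0 ℓ)]
      have e1 : A (0, ℓ) ((1 : ℝ), (0 : ℝ)) = 0 := by rw [← hdT]; exact hdTℓ
      have e2 : A (0, 0) ((1 : ℝ), (0 : ℝ)) = 0 := by rw [← hdT]; exact hdT0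
      rw [e1, e2, inner_zero_right, inner_zero_right, sub_zero]
    rw [intervalIntegral.integral_add (hgc.intervalIntegrable 0 ℓ)
      (hh2c.intervalIntegrable 0 ℓ)] at ibp
    have step2 : (∫ s in (0 : ℝ)..ℓ, ⟪dT γ 0 s, dSS γ 0 s⟫) = ∫ s in (0 : ℝ)..ℓ, h2 s := by
      apply intervalIntegral.integral_congr
      intro s _
      show ⟪dT γ 0 s, dSS γ 0 s⟫ = h2 s
      rw [hdT, hdSS]
      exact real_inner_comm _ _
    rw [step1, step2]
    linarith
  rw [hint] at hL
  exact hL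
end

section
/- Let γ : ℝ × ℝ → EuclideanSpace ℝ (Fin 3) be a smooth (C^∞) map that is ℓ-periodic in its second argument (γ(t, s + ℓ) = γ(t, s) for all t, s, with ℓ > 0), with ‖∂ₛγ(0, s)‖ = 1 for all s, and whose initial velocity obeys the filament equation of motion ∂ₜγ(0, s) = γ₁ • ∂ₛ²γ(0, s) + γ₂ • (∂ₛγ(0, s) ×₃ ∂ₛ²γ(0, s)) for all s, where ×₃ is the cross product in ℝ³ and γ₁, γ₂ are real constants. Define L(t) = ∫₀^ℓ ‖∂ₛγ(t, s)‖ ds. Then L is differentiable at t = 0 with L'(0) = −γ₁ · ∫₀^ℓ ‖∂ₛ²γ(0, s)‖² ds; in particular, if γ₁ > 0 then L'(0) ≤ 0, with equality if and only if ∂ₛ²γ(0, s) = 0 for all s ∈ [0, ℓ]. -/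
open RealInnerProductSpace intervalIntegral Matrix

/-- The cross product on the Euclidean space `ℝ³`. -/
noncomputable def cross3 (a b : EuclideanSpace ℝ (Fin 3)) : EuclideanSpace ℝ (Fin 3) :=
  (EuclideanSpace.equiv (Fin 3) ℝ).symm
    ((EuclideanSpace.equiv (Fin 3) ℝ a) ⨯₃ (EuclideanSpace.equiv (Fin 3) ℝ b))

namespace FilamentAux

lemma hasDerivAt_sliceS {F : Type*} [NormedAddCommGroup F] [NormedSpace ℝ F]
    (f : ℝ × ℝ → F) {t s : ℝ} (hf : DifferentiableAt ℝ f (t, s)) :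
    HasDerivAt (fun σ => f (t, σ)) (fderiv ℝ f (t, s) (0, 1)) s := by
  have h1 : HasDerivAt (fun σ : ℝ => ((t, σ) : ℝ × ℝ)) ((0, 1) : ℝ × ℝ) s :=
    (hasDerivAt_const s t).prodMk (hasDerivAt_id s)
  exact hf.hasFDerivAt.comp_hasDerivAt s h1

lemma hasDerivAt_sliceT {F : Type*} [NormedAddCommGroup F] [NormedSpace ℝ F]
    (f : ℝ × ℝ → F) {t s : ℝ} (hf : DifferentiableAt ℝ f (t, s)) :
    HasDerivAt (fun τ => f (τ, s)) (fderiv ℝ f (t, s) (1, 0)) t := by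
  have h1 : HasDerivAt (fun τ : ℝ => ((τ, s) : ℝ × ℝ)) ((1, 0) : ℝ × ℝ) t :=
    (hasDerivAt_id t).prodMk (hasDerivAt_const t s)
  exact hf.hasFDerivAt.comp_hasDerivAt t h1

lemma inner_self_cross3 (a b : EuclideanSpace ℝ (Fin 3)) : ⟪a, cross3 a b⟫ = 0 := by
  have h := dot_self_cross (EuclideanSpace.equiv (Fin 3) ℝ a) (EuclideanSpace.equiv (Fin 3) ℝ b)
  simpa [cross3, PiLp.inner_apply, dotProduct, RCLike.inner_apply, Fin.sum_univ_three,
    mul_comm] using h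

lemma inner_cross3_self (a b : EuclideanSpace ℝ (Fin 3)) : ⟪b, cross3 a b⟫ = 0 := by
  have h := dot_cross_self (EuclideanSpace.equiv (Fin 3) ℝ a) (EuclideanSpace.equiv (Fin 3) ℝ b)
  simpa [cross3, PiLp.inner_apply, dotProduct, RCLike.inner_apply, Fin.sum_univ_three,
    mul_comm] using h

lemma fderiv_clm_apply_eq {F : Type*} [NormedAddCommGroup F] [NormedSpace ℝ F]
    (f : ℝ × ℝ → F) (hf : ContDiff ℝ (⊤ : ℕ∞) f) (p : ℝ × ℝ) (v w : ℝ × ℝ) :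
    fderiv ℝ (fun q => fderiv ℝ f q v) p w = fderiv ℝ (fderiv ℝ f) p w v := by
  have hd : HasFDerivAt (fderiv ℝ f) (fderiv ℝ (fderiv ℝ f) p) p :=
    (((hf.fderiv_right (m := (⊤ : ℕ∞)) (by simp)).differentiable (by simp)) p).hasFDerivAt
  have h2 : HasFDerivAt (fun q => fderiv ℝ f q v)
      ((ContinuousLinearMap.apply ℝ F v).comp (fderiv ℝ (fderiv ℝ f) p)) p :=
    (ContinuousLinearMap.apply ℝ F v).hasFDerivAt.comp p hd
  rw [h2.fderiv]; rfl

lemma mixed_symm {F : Type*} [NormedAddCommGroup F] [NormedSpace ℝ F]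
    (f : ℝ × ℝ → F) (hf : ContDiff ℝ (⊤ : ℕ∞) f) (p : ℝ × ℝ) :
    fderiv ℝ (fun q => fderiv ℝ f q (1, 0)) p (0, 1)
      = fderiv ℝ (fun q => fderiv ℝ f q (0, 1)) p (1, 0) := by
  rw [fderiv_clm_apply_eq f hf, fderiv_clm_apply_eq f hf]
  exact (second_derivative_symmetric
    (fun y => ((hf.differentiable (by simp)) y).hasFDerivAt)
    ((((hf.fderiv_right (m := (⊤ : ℕ∞)) (by simp)).differentiable (by simp)) p).hasFDerivAt) (0, 1) (1, 0))

lemma hasDerivAt_norm_of_ne {E : Type*} [NormedAddCommGroup E] [InnerProductSpace ℝ E]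
    {g : ℝ → E} {g' : E} {x : ℝ} (hg : HasDerivAt g g' x) (h0 : g x ≠ 0) :
    HasDerivAt (fun τ => ‖g τ‖) (⟪g x, g'⟫ / ‖g x‖) x := by
  have hnx : ‖g x‖ ≠ 0 := norm_ne_zero_iff.mpr h0
  have hq : HasDerivAt (fun τ => ⟪g τ, g τ⟫) (⟪g x, g'⟫ + ⟪g', g x⟫) x :=
    hg.inner ℝ hg
  have hqx : ⟪g x, g x⟫ ≠ 0 := by
    rw [real_inner_self_eq_norm_sq]; positivity
  have hs := (Real.hasDerivAt_sqrt hqx).comp x hq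
  have hfun : (Real.sqrt ∘ fun τ => ⟪g τ, g τ⟫) = fun τ => ‖g τ‖ := by
    funext τ
    simp [Function.comp, real_inner_self_eq_norm_sq, Real.sqrt_sq (norm_nonneg _)]
  rw [hfun] at hs
  refine hs.congr_deriv ?_
  symm
  rw [real_inner_self_eq_norm_sq, Real.sqrt_sq (norm_nonneg _), real_inner_comm (g') (g x)]
  field_simp
  ring

/-- `∂ₛγ` as evaluation of the full Fréchet derivative. -/
noncomputable def G1 (γ : ℝ × ℝ → EuclideanSpace ℝ (Fin 3)) (p : ℝ × ℝ) :
    EuclideanSpace ℝ (Fin 3) := fderiv ℝ γ p (0, 1)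

/-- `∂ₜγ` as evaluation of the full Fréchet derivative. -/
noncomputable def H1 (γ : ℝ × ℝ → EuclideanSpace ℝ (Fin 3)) (p : ℝ × ℝ) :
    EuclideanSpace ℝ (Fin 3) := fderiv ℝ γ p (1, 0)

/-- `∂ₛ²γ`. -/
noncomputable def G2 (γ : ℝ × ℝ → EuclideanSpace ℝ (Fin 3)) (p : ℝ × ℝ) :
    EuclideanSpace ℝ (Fin 3) := fderiv ℝ (G1 γ) p (0, 1)

/-- `∂ₜ∂ₛγ`. -/
noncomputable def Gt (γ : ℝ × ℝ → EuclideanSpace ℝ (Fin 3)) (p : ℝ × ℝ) :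
    EuclideanSpace ℝ (Fin 3) := fderiv ℝ (G1 γ) p (1, 0)

/-- `∂ₛ∂ₜγ`. -/
noncomputable def H1s (γ : ℝ × ℝ → EuclideanSpace ℝ (Fin 3)) (p : ℝ × ℝ) :
    EuclideanSpace ℝ (Fin 3) := fderiv ℝ (H1 γ) p (0, 1)

variable {γ : ℝ × ℝ → EuclideanSpace ℝ (Fin 3)}

lemma contG1 (hγ : ContDiff ℝ (⊤ : ℕ∞) γ) : ContDiff ℝ (⊤ : ℕ∞) (G1 γ) :=
  (hγ.fderiv_right (by simp)).clm_apply contDiff_const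

lemma contH1 (hγ : ContDiff ℝ (⊤ : ℕ∞) γ) : ContDiff ℝ (⊤ : ℕ∞) (H1 γ) :=
  (hγ.fderiv_right (by simp)).clm_apply contDiff_const

lemma contG2 (hγ : ContDiff ℝ (⊤ : ℕ∞) γ) : ContDiff ℝ (⊤ : ℕ∞) (G2 γ) :=
  ((contG1 hγ).fderiv_right (by simp)).clm_apply contDiff_const

lemma contGt (hγ : ContDiff ℝ (⊤ : ℕ∞) γ) : ContDiff ℝ (⊤ : ℕ∞) (Gt γ) :=
  ((contG1 hγ).fderiv_right (by simp)).clm_apply contDiff_const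

lemma hasDerivAt_G1_s (hγ : ContDiff ℝ (⊤ : ℕ∞) γ) (t s : ℝ) :
    HasDerivAt (fun σ => G1 γ (t, σ)) (G2 γ (t, s)) s :=
  hasDerivAt_sliceS (G1 γ) (((contG1 hγ).differentiable (by simp)) _)

lemma hasDerivAt_G1_t (hγ : ContDiff ℝ (⊤ : ℕ∞) γ) (t s : ℝ) :
    HasDerivAt (fun τ => G1 γ (τ, s)) (Gt γ (t, s)) t :=
  hasDerivAt_sliceT (G1 γ) (((contG1 hγ).differentiable (by simp)) _)

lemma hasDerivAt_H1_s (hγ : ContDiff ℝ (⊤ : ℕ∞) γ) (t s : ℝ) :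
    HasDerivAt (fun σ => H1 γ (t, σ)) (H1s γ (t, s)) s :=
  hasDerivAt_sliceS (H1 γ) (((contH1 hγ).differentiable (by simp)) _)

lemma dS_eq (hγ : ContDiff ℝ (⊤ : ℕ∞) γ) (t s : ℝ) : dS γ t s = G1 γ (t, s) :=
  (hasDerivAt_sliceS γ ((hγ.differentiable (by simp)) _)).deriv

lemma dT_eq (hγ : ContDiff ℝ (⊤ : ℕ∞) γ) (t s : ℝ) : dT γ t s = H1 γ (t, s) :=
  (hasDerivAt_sliceT γ ((hγ.differentiable (by simp)) _)).deriv

lemma dSS_eq (hγ : ContDiff ℝ (⊤ : ℕ∞) γ) (t s : ℝ) : dSS γ t s = G2 γ (t, s) := by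
  have h : (fun σ => dS γ t σ) = fun σ => G1 γ (t, σ) := funext fun σ => dS_eq hγ t σ
  rw [dSS, h]
  exact (hasDerivAt_G1_s hγ t s).deriv

lemma H1s_eq_Gt (hγ : ContDiff ℝ (⊤ : ℕ∞) γ) (p : ℝ × ℝ) : H1s γ p = Gt γ p :=
  mixed_symm γ hγ p

end FilamentAux

open FilamentAux MeasureTheory

/-- Change-of-length rate for a closed filament obeying the Biktashev equation of
motion `Ẋ = γ₁ k N + γ₂ k B`: the length `L(t) = ∫₀^ℓ ‖∂ₛγ(t,s)‖ ds` satisfies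
`L'(0) = −γ₁ ∫₀^ℓ ‖∂ₛ²γ(0,s)‖² ds`; for positive filament tension `γ₁ > 0` this is
nonpositive, and vanishes exactly when the initial filament is straight. -/
theorem length_change_rate_of_filament_motion (γ : ℝ × ℝ → EuclideanSpace ℝ (Fin 3))
    (hγ : ContDiff ℝ (⊤ : ℕ∞) γ) (ℓ : ℝ) (hℓ : 0 < ℓ)
    (hper : ∀ t s : ℝ, γ (t, s + ℓ) = γ (t, s))
    (hunit : ∀ s : ℝ, ‖dS γ 0 s‖ = 1)
    (γ₁ γ₂ : ℝ)
    (heom : ∀ s : ℝ, dT γ 0 s = γ₁ • dSS γ 0 s + γ₂ • cross3 (dS γ 0 s) (dSS γ 0 s)) :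
    HasDerivAt (fun t => ∫ s in (0 : ℝ)..ℓ, ‖dS γ t s‖)
      (-γ₁ * ∫ s in (0 : ℝ)..ℓ, ‖dSS γ 0 s‖ ^ 2) 0 ∧
    (0 < γ₁ →
      (-γ₁ * ∫ s in (0 : ℝ)..ℓ, ‖dSS γ 0 s‖ ^ 2 ≤ 0 ∧
        (-γ₁ * ∫ s in (0 : ℝ)..ℓ, ‖dSS γ 0 s‖ ^ 2 = 0 ↔
          ∀ s ∈ Set.Icc (0 : ℝ) ℓ, dSS γ 0 s = 0))) := by
  have hdS : ∀ t s, dS γ t s = G1 γ (t, s) := dS_eq hγ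
  have hdT : ∀ t s, dT γ t s = H1 γ (t, s) := dT_eq hγ
  have hdSS : ∀ t s, dSS γ t s = G2 γ (t, s) := dSS_eq hγ
  -- ⟪∂ₛγ, ∂ₛ²γ⟫ = 0 by unit speed
  have hSS0 : ∀ s : ℝ, ⟪G1 γ (0, s), G2 γ (0, s)⟫ = 0 := by
    intro s
    have hc : HasDerivAt (fun σ => ⟪G1 γ (0, σ), G1 γ (0, σ)⟫)
        (⟪G1 γ (0, s), G2 γ (0, s)⟫ + ⟪G2 γ (0, s), G1 γ (0, s)⟫) s :=
      (hasDerivAt_G1_s hγ 0 s).inner ℝ (hasDerivAt_G1_s hγ 0 s)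
    have hcn : (fun σ => ⟪G1 γ (0, σ), G1 γ (0, σ)⟫) = fun _ => (1 : ℝ) := by
      funext σ
      rw [real_inner_self_eq_norm_sq, ← hdS, hunit]; norm_num
    rw [hcn] at hc
    have h2 := hc.unique (hasDerivAt_const s 1)
    have h3 := real_inner_comm (G2 γ (0, s)) (G1 γ (0, s))
    linarith
  -- ⟪∂ₛγ, ∂ₜγ⟫ = 0 everywhere (at t = 0)
  have hzero : ∀ σ : ℝ, ⟪G1 γ (0, σ), H1 γ (0, σ)⟫ = 0 := by
    intro σ
    rw [← hdS, ← hdT, heom σ, inner_add_right, real_inner_smul_right, real_inner_smul_right,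
      hdS, hdSS, hSS0, ← hdS, ← hdSS, inner_self_cross3]
    ring
  -- the key pointwise identity
  have hkey : ∀ s : ℝ, ⟪G1 γ (0, s), Gt γ (0, s)⟫ = -(γ₁ * ‖dSS γ 0 s‖ ^ 2) := by
    intro s
    have hprod : HasDerivAt (fun σ => ⟪G1 γ (0, σ), H1 γ (0, σ)⟫)
        (⟪G1 γ (0, s), H1s γ (0, s)⟫ + ⟪G2 γ (0, s), H1 γ (0, s)⟫) s :=
      (hasDerivAt_G1_s hγ 0 s).inner ℝ (hasDerivAt_H1_s hγ 0 s)
    have hcn : (fun σ => ⟪G1 γ (0, σ), H1 γ (0, σ)⟫) = fun _ => (0 : ℝ) :=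
      funext fun σ => hzero σ
    rw [hcn] at hprod
    have h2 := hprod.unique (hasDerivAt_const s 0)
    have h3 : ⟪G2 γ (0, s), H1 γ (0, s)⟫ = γ₁ * ‖dSS γ 0 s‖ ^ 2 := by
      rw [← hdSS, ← hdT, heom s, inner_add_right, real_inner_smul_right, real_inner_smul_right,
        inner_cross3_self, real_inner_self_eq_norm_sq]
      ring
    rw [H1s_eq_Gt hγ] at h2
    linarith
  -- continuity facts
  have hcontG1 : Continuous (G1 γ) := (contG1 hγ).continuous
  have hcontGt : Continuous (Gt γ) := (contGt hγ).continuous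
  have hcontG2 : Continuous (G2 γ) := (contG2 hγ).continuous
  -- uniform lower bound on ‖G1‖ near t = 0
  have hCcomp : IsCompact (({(0 : ℝ)} : Set ℝ) ×ˢ Set.Icc (0 : ℝ) ℓ) :=
    isCompact_singleton.prod isCompact_Icc
  have hVopen : IsOpen {p : ℝ × ℝ | 1 / 2 < ‖G1 γ p‖} :=
    isOpen_lt continuous_const hcontG1.norm
  have hCV : (({(0 : ℝ)} : Set ℝ) ×ˢ Set.Icc (0 : ℝ) ℓ) ⊆ {p | 1 / 2 < ‖G1 γ p‖} := by
    rintro ⟨x, s⟩ ⟨hx, hs⟩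
    simp only [Set.mem_singleton_iff] at hx
    subst hx
    simp only [Set.mem_setOf_eq]
    rw [← hdS 0 s, hunit s]; norm_num
  obtain ⟨δ, hδpos, hδ⟩ := hCcomp.exists_thickening_subset_open hVopen hCV
  set ε : ℝ := min δ 1 with hεdef
  have hεpos : 0 < ε := lt_min hδpos one_pos
  have hball : ∀ x ∈ Metric.ball (0 : ℝ) ε, ∀ s ∈ Set.Icc (0 : ℝ) ℓ,
      1 / 2 < ‖G1 γ (x, s)‖ := by
    intro x hx s hs
    apply hδ
    rw [Metric.mem_thickening_iff]
    refine ⟨(0, s), ⟨rfl, hs⟩, ?_⟩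
    have hxd : |x| < δ := by
      have := Metric.mem_ball.mp hx
      rw [Real.dist_eq, sub_zero] at this
      exact lt_of_lt_of_le this (min_le_left _ _)
    simp only [Prod.dist_eq, Real.dist_eq, sub_zero, sub_self, abs_zero]
    simpa using hxd
  -- uniform bound on ‖Gt‖
  obtain ⟨M, hM⟩ := (isCompact_Icc.prod isCompact_Icc :
    IsCompact (Set.Icc (-1 : ℝ) 1 ×ˢ Set.Icc (0 : ℝ) ℓ)).exists_bound_of_continuousOn
      hcontGt.continuousOn
  have hsub : Set.uIoc (0 : ℝ) ℓ ⊆ Set.Icc 0 ℓ := by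
    rw [Set.uIoc_of_le hℓ.le]; exact Set.Ioc_subset_Icc_self
  -- differentiate under the integral sign
  obtain ⟨-, hmain⟩ :=
    intervalIntegral.hasDerivAt_integral_of_dominated_loc_of_deriv_le
      (F := fun x s => ‖G1 γ (x, s)‖)
      (F' := fun x s => ⟪G1 γ (x, s), Gt γ (x, s)⟫ / ‖G1 γ (x, s)‖)
      (x₀ := (0 : ℝ)) (a := (0 : ℝ)) (b := ℓ) (bound := fun _ => M) (μ := volume)
      (Metric.ball_mem_nhds 0 hεpos)
      (Filter.Eventually.of_forall fun x =>
        ((hcontG1.comp (Continuous.prodMk_right x)).norm).aestronglyMeasurable)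
      (((hcontG1.comp (Continuous.prodMk_right 0)).norm).intervalIntegrable 0 ℓ)
      (((((hcontG1.comp (Continuous.prodMk_right 0)).inner
          (hcontGt.comp (Continuous.prodMk_right 0)))).div
        ((hcontG1.comp (Continuous.prodMk_right 0)).norm)
        (fun s => by
          simp only [Function.comp_apply]
          rw [← hdS 0 s, hunit s]; norm_num)).aestronglyMeasurable)
      (Filter.Eventually.of_forall (fun s hs x hx => by
        have h2 := hball x hx s (hsub hs)
        have hx1 : x ∈ Set.Icc (-1 : ℝ) 1 := by
          have hxe : |x| < ε := by
            have := Metric.mem_ball.mp hx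
            rwa [Real.dist_eq, sub_zero] at this
          have : |x| ≤ 1 := le_of_lt (lt_of_lt_of_le hxe (min_le_right _ _))
          exact abs_le.mp this |> fun h => ⟨h.1, h.2⟩
        have hGtM := hM (x, s) ⟨hx1, hsub hs⟩
        rw [Real.norm_eq_abs, abs_div, abs_of_nonneg (norm_nonneg _),
          div_le_iff₀ (by linarith : (0 : ℝ) < ‖G1 γ (x, s)‖)]
        nlinarith [abs_real_inner_le_norm (G1 γ (x, s)) (Gt γ (x, s)),
          norm_nonneg (G1 γ (x, s)), norm_nonneg (Gt γ (x, s))]))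
      intervalIntegrable_const
      (Filter.Eventually.of_forall (fun s hs x hx => by
        have h2 := hball x hx s (hsub hs)
        exact hasDerivAt_norm_of_ne (hasDerivAt_G1_t hγ x s)
          (fun h0 => by rw [h0, norm_zero] at h2; linarith)))
  -- rewrite the derivative value
  have hval : (∫ s in (0 : ℝ)..ℓ, ⟪G1 γ (0, s), Gt γ (0, s)⟫ / ‖G1 γ (0, s)‖)
      = -γ₁ * ∫ s in (0 : ℝ)..ℓ, ‖dSS γ 0 s‖ ^ 2 := by
    have h1 : ∀ s : ℝ, ⟪G1 γ (0, s), Gt γ (0, s)⟫ / ‖G1 γ (0, s)‖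
        = -γ₁ * ‖dSS γ 0 s‖ ^ 2 := by
      intro s
      rw [hkey s, ← hdS 0 s, hunit s, div_one]; ring
    rw [intervalIntegral.integral_congr
      (g := fun s => -γ₁ * ‖dSS γ 0 s‖ ^ 2) (fun s _ => h1 s)]
    exact intervalIntegral.integral_const_mul _ _
  rw [hval] at hmain
  have hfun : (fun x : ℝ => ∫ s in (0 : ℝ)..ℓ, ‖G1 γ (x, s)‖)
      = fun t => ∫ s in (0 : ℝ)..ℓ, ‖dS γ t s‖ := by
    funext x
    simp only [hdS]
  rw [hfun] at hmain
  refine ⟨hmain, fun hγ₁ => ?_⟩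
  have hInonneg : 0 ≤ ∫ s in (0 : ℝ)..ℓ, ‖dSS γ 0 s‖ ^ 2 :=
    intervalIntegral.integral_nonneg hℓ.le (fun s _ => sq_nonneg _)
  have hfcont : Continuous fun s : ℝ => ‖dSS γ 0 s‖ ^ 2 := by
    have h1 : (fun s : ℝ => dSS γ 0 s) = fun s => G2 γ (0, s) := funext fun s => hdSS 0 s
    have h2 : Continuous fun s : ℝ => dSS γ 0 s := by
      rw [h1]; exact hcontG2.comp (Continuous.prodMk_right 0)
    exact h2.norm.pow 2
  refine ⟨by nlinarith, ?_, ?_⟩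
  · intro h0
    have hI : ∫ s in (0 : ℝ)..ℓ, ‖dSS γ 0 s‖ ^ 2 = 0 := by
      rcases mul_eq_zero.mp h0 with h | h
      · exfalso; rw [neg_eq_zero] at h; linarith
      · exact h
    rw [intervalIntegral.integral_of_le hℓ.le] at hI
    have hint : IntegrableOn (fun s => ‖dSS γ 0 s‖ ^ 2) (Set.Ioc 0 ℓ) :=
      hfcont.integrableOn_Ioc
    have hae := (integral_eq_zero_iff_of_nonneg (fun s => sq_nonneg _) hint).mp hI
    have hIoc : Set.EqOn (fun s => ‖dSS γ 0 s‖ ^ 2) (fun _ => (0 : ℝ)) (Set.Ioc 0 ℓ) :=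
      Measure.eqOn_Ioc_of_ae_eq volume hae hfcont.continuousOn continuousOn_const
    have hIcc : Set.EqOn (fun s => ‖dSS γ 0 s‖ ^ 2) (fun _ => (0 : ℝ)) (Set.Icc 0 ℓ) := by
      have hcl := hIoc.closure hfcont continuous_const
      rwa [closure_Ioc hℓ.ne] at hcl
    intro s hs
    have hz := hIcc hs
    simp only at hz
    rwa [pow_eq_zero_iff (two_ne_zero), norm_eq_zero] at hz
  · intro hz
    have hEq : Set.EqOn (fun s => ‖dSS γ 0 s‖ ^ 2) (fun _ => (0 : ℝ)) (Set.uIcc 0 ℓ) := by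
      intro s hs
      rw [Set.uIcc_of_le hℓ.le] at hs
      simp [hz s hs]
    rw [intervalIntegral.integral_congr hEq]
    simp
end
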